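/- Let α ∈ ℝ and let φ be a non-negative locally integrable function satisfying: there are constants C₁,C₂,C₃,C₄>0 with C₁ ≤ φ(s)/s^{2α} ≤ C₂ for all s ≥ 1 and C₃ ≤ φ(s)/s^{2α+1} ≤ C₄ for all 0<s<1. Then there exist constants c,C>0 (depending only on C₁,C₂,C₃,C₄) such that for every non-negative measurable function h on (0,∞) and every x>0, c·E(x) ≤ H*_{α,φ}(I*h)(x) ≤ C·E(x), where E(x) = (1/x)·∫₀ˣ t·h(t)dt + ∫ₓ^∞ h(t)dt + ∫ₓ^∞ ln(t/x)·h(t)dt. -/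

import Mathlib

/-!
Split the defining integral at `y = x`. By the hypotheses on `φ`, the kernel
`x^{2α} φ(y/x) / y^{2α+1}` is comparable to `1/x` on `(0, x)` and to `1/y` on `(x, ∞)`.
Tonelli then gives `∫₀ˣ I*h = ∫₀ˣ t h(t) dt + x ∫ₓ^∞ h` and
`∫ₓ^∞ I*h(y) dy / y = ∫ₓ^∞ log(t/x) h(t) dt`, which are exactly the three terms of the estimate.
-/

open MeasureTheory Set
open scoped ENNReal

/-- The quasi (adjoint) Dunkl–Hausdorff operator acting on `ℝ≥0∞`-valued functions. -/
noncomputable def dhAdjL (α : ℝ) (φ : ℝ → ℝ) (g : ℝ → ℝ≥0∞) (x : ℝ) : ℝ≥0∞ :=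
  ENNReal.ofReal (x ^ (2*α)) * ∫⁻ y in Ioi (0:ℝ), ENNReal.ofReal (φ (y/x) / y ^ (2*α+1)) * g y

/-- `(I*h)(y) = ∫_y^∞ h`. -/
noncomputable def IstarL (h : ℝ → ℝ≥0∞) (y : ℝ) : ℝ≥0∞ := ∫⁻ t in Ioi y, h t

noncomputable def dhKernel (α : ℝ) (φ : ℝ → ℝ) (x y : ℝ) : ℝ :=
  x ^ (2*α) * (φ (y/x) / y ^ (2*α+1))

section Kernel

variable {α : ℝ} {φ : ℝ → ℝ} {x y : ℝ}

lemma dhAdjL_eq_add (hx : 0 < x) (g : ℝ → ℝ≥0∞) :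
    dhAdjL α φ g x = (∫⁻ y in Ioo 0 x, ENNReal.ofReal (dhKernel α φ x y) * g y) +
      ∫⁻ y in Ioi x, ENNReal.ofReal (dhKernel α φ x y) * g y := by
  have hsplit : dhAdjL α φ g x = ∫⁻ y in Ioi 0, ENNReal.ofReal (dhKernel α φ x y) * g y := by
    rw [dhAdjL, ← lintegral_const_mul' _ _ ENNReal.ofReal_ne_top]
    refine setLIntegral_congr_fun measurableSet_Ioi fun y _ => ?_
    rw [dhKernel, ENNReal.ofReal_mul (by positivity), mul_assoc]
  rw [hsplit, ← Ioc_union_Ioi_eq_Ioi hx.le, lintegral_union measurableSet_Ioi Ioc_disjoint_Ioi_same,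
    setLIntegral_congr Ioo_ae_eq_Ioc]

lemma dhKernel_eq_div_rpow_succ_mul (hx : 0 < x) (hy : 0 < y) :
    dhKernel α φ x y = φ (y/x) / (y/x) ^ (2*α+1) * (1/x) := by
  rw [dhKernel, Real.div_rpow hy.le hx.le, Real.rpow_add hx, Real.rpow_one]
  have : y ^ (2*α+1) ≠ 0 := (Real.rpow_pos_of_pos hy _).ne'
  field_simp

lemma dhKernel_eq_div_rpow_mul (hx : 0 < x) (hy : 0 < y) :
    dhKernel α φ x y = φ (y/x) / (y/x) ^ (2*α) * (1/y) := by
  rw [dhKernel, Real.div_rpow hy.le hx.le, Real.rpow_add hy, Real.rpow_one]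
  have : y ^ (2*α) ≠ 0 := (Real.rpow_pos_of_pos hy _).ne'
  field_simp

end Kernel

section Comparison

variable {X : Type*} [MeasurableSpace X] {μ : Measure X} {S : Set X} {K w : X → ℝ}

lemma ofReal_mul_setLIntegral_le {c : ℝ} (hS : MeasurableSet S) (g : X → ℝ≥0∞)
    (hw : ∀ y ∈ S, 0 ≤ w y) (hK : ∀ y ∈ S, c * w y ≤ K y) :
    ENNReal.ofReal c * ∫⁻ y in S, ENNReal.ofReal (w y) * g y ∂μ ≤
      ∫⁻ y in S, ENNReal.ofReal (K y) * g y ∂μ := by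
  rw [← lintegral_const_mul' _ _ ENNReal.ofReal_ne_top]
  refine setLIntegral_mono' hS fun y hy => ?_
  rw [← mul_assoc, ← ENNReal.ofReal_mul' (hw y hy)]
  gcongr
  exact hK y hy

lemma setLIntegral_le_ofReal_mul {C : ℝ} (hS : MeasurableSet S) (g : X → ℝ≥0∞)
    (hw : ∀ y ∈ S, 0 ≤ w y) (hK : ∀ y ∈ S, K y ≤ C * w y) :
    ∫⁻ y in S, ENNReal.ofReal (K y) * g y ∂μ ≤
      ENNReal.ofReal C * ∫⁻ y in S, ENNReal.ofReal (w y) * g y ∂μ := by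
  rw [← lintegral_const_mul' _ _ ENNReal.ofReal_ne_top]
  refine setLIntegral_mono' hS fun y hy => ?_
  rw [← mul_assoc, ← ENNReal.ofReal_mul' (hw y hy)]
  gcongr
  exact hK y hy

end Comparison

section Bounds

variable {α : ℝ} {φ : ℝ → ℝ} {x : ℝ}

lemma ofReal_mul_add_le_dhAdjL (hx : 0 < x) {c₁ c₃ : ℝ}
    (hout : ∀ s : ℝ, 1 ≤ s → c₁ ≤ φ s / s ^ (2*α))
    (hin : ∀ s : ℝ, 0 < s → s < 1 → c₃ ≤ φ s / s ^ (2*α+1)) (g : ℝ → ℝ≥0∞) :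
    ENNReal.ofReal c₃ * (∫⁻ y in Ioo 0 x, ENNReal.ofReal (1/x) * g y) +
      ENNReal.ofReal c₁ * (∫⁻ y in Ioi x, ENNReal.ofReal (1/y) * g y) ≤ dhAdjL α φ g x := by
  rw [dhAdjL_eq_add hx]
  gcongr
  · refine ofReal_mul_setLIntegral_le measurableSet_Ioo g (fun _ _ => by positivity) fun y hy => ?_
    rw [dhKernel_eq_div_rpow_succ_mul hx hy.1]
    exact mul_le_mul_of_nonneg_right (hin _ (div_pos hy.1 hx) ((div_lt_one hx).2 hy.2))
      (by positivity)
  · refine ofReal_mul_setLIntegral_le measurableSet_Ioi g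
      (fun y hy => one_div_nonneg.2 (hx.trans hy).le) fun y hy => ?_
    rw [dhKernel_eq_div_rpow_mul hx (hx.trans hy)]
    exact mul_le_mul_of_nonneg_right (hout _ ((one_le_div hx).2 (le_of_lt hy)))
      (one_div_nonneg.2 (hx.trans hy).le)

lemma dhAdjL_le_ofReal_mul_add (hx : 0 < x) {c₂ c₄ : ℝ}
    (hout : ∀ s : ℝ, 1 ≤ s → φ s / s ^ (2*α) ≤ c₂)
    (hin : ∀ s : ℝ, 0 < s → s < 1 → φ s / s ^ (2*α+1) ≤ c₄) (g : ℝ → ℝ≥0∞) :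
    dhAdjL α φ g x ≤ ENNReal.ofReal c₄ * (∫⁻ y in Ioo 0 x, ENNReal.ofReal (1/x) * g y) +
      ENNReal.ofReal c₂ * (∫⁻ y in Ioi x, ENNReal.ofReal (1/y) * g y) := by
  rw [dhAdjL_eq_add hx]
  gcongr
  · refine setLIntegral_le_ofReal_mul measurableSet_Ioo g (fun _ _ => by positivity) fun y hy => ?_
    rw [dhKernel_eq_div_rpow_succ_mul hx hy.1]
    exact mul_le_mul_of_nonneg_right (hin _ (div_pos hy.1 hx) ((div_lt_one hx).2 hy.2))
      (by positivity)
  · refine setLIntegral_le_ofReal_mul measurableSet_Ioi g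
      (fun y hy => one_div_nonneg.2 (hx.trans hy).le) fun y hy => ?_
    rw [dhKernel_eq_div_rpow_mul hx (hx.trans hy)]
    exact mul_le_mul_of_nonneg_right (hout _ ((one_le_div hx).2 (le_of_lt hy)))
      (one_div_nonneg.2 (hx.trans hy).le)

end Bounds

section Tonelli

variable {h : ℝ → ℝ≥0∞} {x : ℝ}

lemma setLIntegral_mul_IstarL {w : ℝ → ℝ≥0∞} (hw : Measurable w) (hh : Measurable h)
    {S : Set ℝ} {a : ℝ} (hSa : S ⊆ Ici a) :
    ∫⁻ y in S, w y * IstarL h y = ∫⁻ t in Ioi a, (∫⁻ y in S ∩ Iio t, w y) * h t := by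
  have hF : Measurable (Function.uncurry fun y t => w y * (Ioi y).indicator h t) := by
    have : (Function.uncurry fun y t => w y * (Ioi y).indicator h t) =
        fun p : ℝ × ℝ => w p.1 * {q : ℝ × ℝ | q.1 < q.2}.indicator (fun q => h q.2) p := by
      ext ⟨y, t⟩
      by_cases hyt : y < t <;> simp [hyt]
    rw [this]
    exact (hw.comp measurable_fst).mul ((hh.comp measurable_snd).indicator
      (measurableSet_lt measurable_fst measurable_snd))
  have hswap : ∀ t, ∫⁻ y in S, w y * (Ioi y).indicator h t = (∫⁻ y in S ∩ Iio t, w y) * h t := by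
    intro t
    have : ∀ y, w y * (Ioi y).indicator h t = (Iio t).indicator w y * h t := by
      intro y
      by_cases hyt : y < t <;> simp [hyt]
    simp_rw [this]
    rw [lintegral_mul_const _ (hw.indicator measurableSet_Iio),
      setLIntegral_indicator measurableSet_Iio, inter_comm]
  have hsupp : (Function.support fun t => (∫⁻ y in S ∩ Iio t, w y) * h t) ⊆ Ioi a := by
    intro t ht
    by_contra hta
    have hempty : S ∩ Iio t = ∅ :=
      eq_empty_of_forall_notMem fun y hy => hta (mem_Ioi.2 ((hSa hy.1).trans_lt hy.2))
    simp [hempty] at ht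
  calc ∫⁻ y in S, w y * IstarL h y = ∫⁻ y in S, ∫⁻ t, w y * (Ioi y).indicator h t := by
        refine lintegral_congr fun y => ?_
        rw [IstarL, ← lintegral_indicator measurableSet_Ioi,
          lintegral_const_mul _ (hh.indicator measurableSet_Ioi)]
    _ = ∫⁻ t, (∫⁻ y in S ∩ Iio t, w y) * h t := by
        rw [lintegral_lintegral_swap hF.aemeasurable]
        simp_rw [hswap]
    _ = _ := (setLIntegral_eq_of_support_subset hsupp).symm

lemma setLIntegral_Ioo_ofReal_one_div {t : ℝ} (hx : 0 < x) (ht : x < t) :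
    ∫⁻ y in Ioo x t, ENNReal.ofReal (1/y) = ENNReal.ofReal (Real.log (t/x)) := by
  have hint : IntegrableOn (fun y : ℝ => 1/y) (Icc x t) :=
    (continuousOn_const.div continuousOn_id fun y hy => (hx.trans_le hy.1).ne').integrableOn_Icc
  rw [← ofReal_integral_eq_lintegral_ofReal (hint.mono_set Ioo_subset_Icc_self)
      ((ae_restrict_iff' measurableSet_Ioo).2 (ae_of_all _ fun y hy =>
        one_div_nonneg.2 (hx.trans hy.1).le)),
    ← integral_Ioc_eq_integral_Ioo, ← intervalIntegral.integral_of_le ht.le,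
    integral_one_div]
  rw [uIcc_of_le ht.le]
  exact fun h0 => hx.not_ge h0.1

lemma setLIntegral_Ioo_const_mul_IstarL (hh : Measurable h) (hx : 0 < x) :
    ∫⁻ y in Ioo 0 x, ENNReal.ofReal (1/x) * IstarL h y =
      ENNReal.ofReal (1/x) * (∫⁻ t in Ioo 0 x, ENNReal.ofReal t * h t) + ∫⁻ t in Ioi x, h t := by
  rw [setLIntegral_mul_IstarL measurable_const hh
      (Ioo_subset_Ioi_self.trans Ioi_subset_Ici_self),
    ← Ioc_union_Ioi_eq_Ioi hx.le, lintegral_union measurableSet_Ioi Ioc_disjoint_Ioi_same,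
    ← setLIntegral_congr Ioo_ae_eq_Ioc, ← lintegral_const_mul _ (by fun_prop)]
  congr 1
  · refine setLIntegral_congr_fun measurableSet_Ioo fun t ht => ?_
    rw [Ioo_inter_Iio, min_eq_right ht.2.le, setLIntegral_const, Real.volume_Ioo, sub_zero,
      mul_assoc]
  · refine setLIntegral_congr_fun measurableSet_Ioi fun t ht => ?_
    rw [Ioo_inter_Iio, min_eq_left (le_of_lt ht), setLIntegral_const, Real.volume_Ioo, sub_zero,
      ← ENNReal.ofReal_mul (by positivity), one_div_mul_cancel hx.ne', ENNReal.ofReal_one, one_mul]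

lemma setLIntegral_Ioi_one_div_mul_IstarL (hh : Measurable h) (hx : 0 < x) :
    ∫⁻ y in Ioi x, ENNReal.ofReal (1/y) * IstarL h y =
      ∫⁻ t in Ioi x, ENNReal.ofReal (Real.log (t/x)) * h t := by
  rw [setLIntegral_mul_IstarL (by fun_prop) hh Ioi_subset_Ici_self]
  refine setLIntegral_congr_fun measurableSet_Ioi fun t ht => ?_
  rw [Ioi_inter_Iio, setLIntegral_Ioo_ofReal_one_div hx ht]

end Tonelli

theorem dunklHAdj_Istar_estimate_general (α C₁ C₂ C₃ C₄ : ℝ)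
    (hC₁ : 0 < C₁) (hC₂ : 0 < C₂) (hC₃ : 0 < C₃) :
    ∃ c C : ℝ, 0 < c ∧ 0 < C ∧
      ∀ φ : ℝ → ℝ, (∀ s, 0 ≤ φ s) → LocallyIntegrableOn φ (Ioi 0) →
        (∀ s : ℝ, 1 ≤ s → C₁ ≤ φ s / s ^ (2*α) ∧ φ s / s ^ (2*α) ≤ C₂) →
        (∀ s : ℝ, 0 < s → s < 1 → C₃ ≤ φ s / s ^ (2*α+1) ∧ φ s / s ^ (2*α+1) ≤ C₄) →
        ∀ h : ℝ → ℝ≥0∞, Measurable h → ∀ x : ℝ, 0 < x →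
          ENNReal.ofReal c * (ENNReal.ofReal (1/x) * (∫⁻ t in Ioo (0:ℝ) x, ENNReal.ofReal t * h t) + (∫⁻ t in Ioi x, h t) + (∫⁻ t in Ioi x, ENNReal.ofReal (Real.log (t/x)) * h t)) ≤ dhAdjL α φ (IstarL h) x ∧
          dhAdjL α φ (IstarL h) x ≤ ENNReal.ofReal C * (ENNReal.ofReal (1/x) * (∫⁻ t in Ioo (0:ℝ) x, ENNReal.ofReal t * h t) + (∫⁻ t in Ioi x, h t) + (∫⁻ t in Ioi x, ENNReal.ofReal (Real.log (t/x)) * h t)) := by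
  refine ⟨min C₁ C₃, max C₂ C₄, lt_min hC₁ hC₃, lt_max_of_lt_left hC₂, ?_⟩
  intro φ _ _ hout hin h hh x hx
  rw [← setLIntegral_Ioo_const_mul_IstarL hh hx, ← setLIntegral_Ioi_one_div_mul_IstarL hh hx]
  constructor
  · calc _ ≤ ENNReal.ofReal C₃ * (∫⁻ y in Ioo 0 x, ENNReal.ofReal (1/x) * IstarL h y) +
            ENNReal.ofReal C₁ * (∫⁻ y in Ioi x, ENNReal.ofReal (1/y) * IstarL h y) := by
          rw [mul_add]
          gcongr
          exacts [min_le_right _ _, min_le_left _ _]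
      _ ≤ _ := ofReal_mul_add_le_dhAdjL hx (fun s hs => (hout s hs).1)
          (fun s hs₀ hs₁ => (hin s hs₀ hs₁).1) _
  · calc _ ≤ ENNReal.ofReal C₄ * (∫⁻ y in Ioo 0 x, ENNReal.ofReal (1/x) * IstarL h y) +
            ENNReal.ofReal C₂ * (∫⁻ y in Ioi x, ENNReal.ofReal (1/y) * IstarL h y) :=
          dhAdjL_le_ofReal_mul_add hx (fun s hs => (hout s hs).2)
            (fun s hs₀ hs₁ => (hin s hs₀ hs₁).2) _
      _ ≤ _ := by
          rw [mul_add]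
          gcongr
          exacts [le_max_right _ _, le_max_left _ _]

theorem dunklHAdj_Istar_estimate (α C₁ C₂ C₃ C₄ : ℝ)
    (hC₁ : 0 < C₁) (hC₂ : 0 < C₂) (hC₃ : 0 < C₃) (hC₄ : 0 < C₄) :
    ∃ c C : ℝ, 0 < c ∧ 0 < C ∧
      ∀ φ : ℝ → ℝ, (∀ s, 0 ≤ φ s) → LocallyIntegrableOn φ (Ioi 0) →
        (∀ s : ℝ, 1 ≤ s → C₁ ≤ φ s / s ^ (2*α) ∧ φ s / s ^ (2*α) ≤ C₂) →
        (∀ s : ℝ, 0 < s → s < 1 → C₃ ≤ φ s / s ^ (2*α+1) ∧ φ s / s ^ (2*α+1) ≤ C₄) →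
        ∀ h : ℝ → ℝ≥0∞, Measurable h → ∀ x : ℝ, 0 < x →
          ENNReal.ofReal c * (ENNReal.ofReal (1/x) * (∫⁻ t in Ioo (0:ℝ) x, ENNReal.ofReal t * h t) + (∫⁻ t in Ioi x, h t) + (∫⁻ t in Ioi x, ENNReal.ofReal (Real.log (t/x)) * h t)) ≤ dhAdjL α φ (IstarL h) x ∧
          dhAdjL α φ (IstarL h) x ≤ ENNReal.ofReal C * (ENNReal.ofReal (1/x) * (∫⁻ t in Ioo (0:ℝ) x, ENNReal.ofReal t * h t) + (∫⁻ t in Ioi x, h t) + (∫⁻ t in Ioi x, ENNReal.ofReal (Real.log (t/x)) * h t)) :=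
  dunklHAdj_Istar_estimate_general α C₁ C₂ C₃ C₄ hC₁ hC₂ hC₃
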